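/- arXiv:2006.13632 — 2 statements merged into one kernel-verified Lean document; each statement's English description precedes it below -/
import Mathlib

section
/- Let n ≥ 3 and let G ⊆ E(K_n) be a facet of M_{n−2}(K_n), i.e., every vertex has degree at most n−2 in G and for every edge e ∈ E(K_n) ∖ G, the set G ∪ {e} has some vertex of degree greater than n−2. Then |G| ≥ C(n−1,2). -/
/-- Degree of vertex `v` in the edge set `H`. -/
def deg (H : Finset (Sym2 ℕ)) (v : ℕ) : ℕ := (H.filter (fun e => v ∈ e)).card

/-- Edge set of the complete graph `K_n` on vertex set `{1,…,n}`. -/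
def EK (n : ℕ) : Finset (Sym2 ℕ) := (Finset.Icc 1 n).sym2.filter (fun e => ¬ e.IsDiag)

/-!
Let `M` be the set of edges of `K_n` missing from the facet `G`. By maximality, every missing
edge has an endpoint of degree `n - 2` in `G`, i.e. an endpoint lying on exactly one missing
edge. So `M` is covered by the one-edge stars at such vertices, whence `|M| ≤ n`; equality
would force every vertex to lie on exactly one missing edge, i.e. `2|M| = n`. Hence
`|M| ≤ n - 1` and `|G| ≥ C(n,2) - (n - 1) = C(n-1,2)`.
-/

open Finset

def completeEdges (V : Finset ℕ) : Finset (Sym2 ℕ) := V.sym2.filter (fun e => ¬ e.IsDiag)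

lemma EK_eq_completeEdges (n : ℕ) : EK n = completeEdges (Icc 1 n) := rfl

lemma card_completeEdges (V : Finset ℕ) : #(completeEdges V) = (#V).choose 2 := by
  rw [completeEdges, sym2_eq_image, Sym2.filter_image_mk_not_isDiag, Sym2.card_image_offDiag]

section CompleteEdges

variable {V : Finset ℕ}

lemma mem_of_mem_completeEdges {e : Sym2 ℕ} {v : ℕ} (he : e ∈ completeEdges V) (hv : v ∈ e) :
    v ∈ V :=
  mem_sym2_iff.mp (mem_filter.mp he).1 v hv

lemma card_filter_mem_of_mem_completeEdges {e : Sym2 ℕ} (he : e ∈ completeEdges V) :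
    #(V.filter (· ∈ e)) = 2 := by
  induction e using Sym2.ind with
  | _ a b =>
    obtain ⟨hab, hne⟩ := mem_filter.mp he
    rw [mk_mem_sym2_iff] at hab
    have hpair : V.filter (· ∈ s(a, b)) = {a, b} := by
      ext x
      simp only [mem_filter, Sym2.mem_iff, mem_insert, mem_singleton]
      constructor
      · exact And.right
      · rintro (rfl | rfl)
        exacts [⟨hab.1, .inl rfl⟩, ⟨hab.2, .inr rfl⟩]
    rw [hpair, card_pair (by simpa using hne)]

lemma deg_completeEdges {v : ℕ} (hv : v ∈ V) : deg (completeEdges V) v = #V - 1 := by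
  have hstar : (completeEdges V).filter (fun e => v ∈ e) = (V.erase v).image (s(v, ·)) := by
    ext e
    induction e using Sym2.ind with
    | _ a b =>
      simp only [completeEdges, mem_filter, mk_mem_sym2_iff, Sym2.mk_isDiag_iff, mem_image,
        mem_erase, Sym2.eq_iff, Sym2.mem_iff]
      grind
  rw [deg, hstar, card_image_of_injective _ (fun _ _ => Sym2.congr_right.mp),
    card_erase_of_mem hv]

lemma sum_deg_eq_two_mul_card {H : Finset (Sym2 ℕ)} (hH : H ⊆ completeEdges V) :
    ∑ v ∈ V, deg H v = 2 * #H := by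
  calc ∑ v ∈ V, deg H v = ∑ e ∈ H, #(V.filter (· ∈ e)) :=
        sum_card_bipartiteAbove_eq_sum_card_bipartiteBelow (fun v e => v ∈ e)
    _ = ∑ _e ∈ H, 2 := sum_congr rfl fun e he => card_filter_mem_of_mem_completeEdges (hH he)
    _ = 2 * #H := by rw [sum_const, smul_eq_mul, mul_comm]

lemma deg_sdiff_of_subset {G H : Finset (Sym2 ℕ)} (h : G ⊆ H) (v : ℕ) :
    deg (H \ G) v = deg H v - deg G v := by
  have hfilter : (H \ G).filter (fun e => v ∈ e) = H.filter (v ∈ ·) \ G.filter (v ∈ ·) := by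
    ext e
    simp only [mem_filter, mem_sdiff]
    tauto
  rw [deg, hfilter, card_sdiff_of_subset (filter_subset_filter _ h)]
  rfl

lemma deg_insert_le (e : Sym2 ℕ) (G : Finset (Sym2 ℕ)) (v : ℕ) :
    deg (insert e G) v ≤ deg G v + 1 := by
  rw [deg, filter_insert]
  split_ifs
  · exact card_insert_le _ _
  · exact Nat.le_succ _

lemma deg_insert_of_notMem {e : Sym2 ℕ} {v : ℕ} (hv : v ∉ e) (G : Finset (Sym2 ℕ)) :
    deg (insert e G) v = deg G v := by
  rw [deg, filter_insert, if_neg hv, deg]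

lemma card_le_of_forall_exists_deg_eq_one {H : Finset (Sym2 ℕ)}
    (hH : H ⊆ completeEdges V) (hleaf : ∀ e ∈ H, ∃ v ∈ e, deg H v = 1) :
    #H ≤ #V - 1 := by
  set S := V.filter (fun v => deg H v = 1)
  have hcover : H ⊆ S.biUnion (fun v => H.filter (fun e => v ∈ e)) := by
    intro e he
    obtain ⟨v, hve, hv⟩ := hleaf e he
    exact mem_biUnion.mpr
      ⟨v, mem_filter.mpr ⟨mem_of_mem_completeEdges (hH he) hve, hv⟩, mem_filter.mpr ⟨he, hve⟩⟩
  have hHS : #H ≤ #S := by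
    simpa using (card_le_card hcover).trans
      (card_biUnion_le_card_mul S _ 1 fun v hv => (mem_filter.mp hv).2.le)
  by_cases hSV : S = V
  · have hsum : ∑ v ∈ V, deg H v = #V := by
      rw [← hSV, sum_congr rfl fun v hv => (mem_filter.mp hv).2, card_eq_sum_ones]
    have := sum_deg_eq_two_mul_card hH
    omega
  · have hSsub : S ⊆ V := filter_subset _ V
    have := card_lt_card (ssubset_of_subset_of_ne hSsub hSV)
    omega

theorem card_sdiff_le_of_maximal {G : Finset (Sym2 ℕ)}
    (hG : G ⊆ completeEdges V) (hdeg : ∀ v, deg G v ≤ #V - 2)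
    (hmax : ∀ e ∈ completeEdges V, e ∉ G → ∃ v, #V - 2 < deg (insert e G) v) :
    #(completeEdges V \ G) ≤ #V - 1 := by
  refine card_le_of_forall_exists_deg_eq_one sdiff_subset fun e he => ?_
  obtain ⟨heV, heG⟩ := mem_sdiff.mp he
  obtain ⟨v, hv⟩ := hmax e heV heG
  have hve : v ∈ e := by
    by_contra hve
    have := hdeg v
    rw [deg_insert_of_notMem hve] at hv
    omega
  have hGv : deg G v = #V - 2 := by
    have := hdeg v
    have := deg_insert_le e G v
    omega
  have hpos : 0 < deg (completeEdges V \ G) v := card_pos.mpr ⟨e, mem_filter.mpr ⟨he, hve⟩⟩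
  refine ⟨v, hve, ?_⟩
  rw [deg_sdiff_of_subset hG, deg_completeEdges (mem_of_mem_completeEdges heV hve), hGv] at hpos ⊢
  omega

end CompleteEdges

theorem facet_card_lower_bound_complete_general (n : ℕ)
    (G : Finset (Sym2 ℕ)) (hsub : G ⊆ EK n)
    (hdeg : ∀ v, deg G v ≤ n - 2)
    (hmax : ∀ e ∈ EK n, e ∉ G → ∃ v, n - 2 < deg (insert e G) v) :
    (n - 1).choose 2 ≤ G.card := by
  rw [EK_eq_completeEdges] at hsub hmax
  have hV : #(Icc 1 n) = n := by simp
  have hmissing := card_sdiff_le_of_maximal (V := Icc 1 n) hsub (by rwa [hV]) (by rwa [hV])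
  rw [card_sdiff_of_subset hsub, card_completeEdges, hV] at hmissing
  have hG := card_le_card hsub
  rw [card_completeEdges, hV] at hG
  have hpascal : n.choose 2 = (n - 1).choose 2 + (n - 1) := by
    cases n with
    | zero => rfl
    | succ m => rw [Nat.choose_succ_succ, Nat.choose_one_right, Nat.add_sub_cancel, add_comm]
  omega

/-- Every facet `G` of `M_{n-2}(K_n)` (a face that cannot be extended by any further
edge of `K_n`) has at least `C(n-1,2)` edges. -/
theorem facet_card_lower_bound_complete (n : ℕ) (hn : 3 ≤ n)
    (G : Finset (Sym2 ℕ)) (hsub : G ⊆ EK n)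
    (hdeg : ∀ v, deg G v ≤ n - 2)
    (hmax : ∀ e ∈ EK n, e ∉ G → ∃ v, n - 2 < deg (insert e G) v) :
    (n - 1).choose 2 ≤ G.card :=
  facet_card_lower_bound_complete_general n G hsub hdeg hmax
end

section
/- Let n ≥ 2 and let H ⊆ E(K_{n,n}) be a facet of M_{n−1}(K_{n,n}), i.e., every vertex has degree at most n−1 in H and for every edge e ∈ E(K_{n,n}) ∖ H, the set H ∪ {e} has some vertex of degree greater than n−1. Then |H| ≥ (n−1)². -/
/-- Vertices of complete bipartite graphs: `Sum.inl i` is the vertex `a_i`,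
`Sum.inr j` is the vertex `b_j`. -/
abbrev BipV : Type := ℕ ⊕ ℕ

/-- Degree of vertex `v` in the edge set `H`. -/
def degB (H : Finset (Sym2 BipV)) (v : BipV) : ℕ := (H.filter (fun e => v ∈ e)).card

/-- Edge set of the complete bipartite graph `K_{m,n}`:
all edges `{a_i, b_j}` with `i ∈ [m]`, `j ∈ [n]`. -/
def EKbip (m n : ℕ) : Finset (Sym2 BipV) :=
  ((Finset.Icc 1 m) ×ˢ (Finset.Icc 1 n)).image (fun p => s(Sum.inl p.1, Sum.inr p.2))

/-- The `r`-matching complex of `K_{m,n}`, as its set of faces. -/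
def MBip (m n r : ℕ) : Set (Finset (Sym2 BipV)) :=
  {H | H ⊆ EKbip m n ∧ ∀ v, degB H v ≤ r}

/-!
Call a vertex saturated if its degree in `H` is `n - 1`. By maximality every edge of `K_{n,n}`
missing from `H` has a saturated endpoint, and a saturated vertex misses at most one edge, so the
number `n² - |H|` of missing edges is at most the number of saturated vertices. If at least `n - 1`
of the `a_i` are saturated, they alone carry `(n - 1)²` edges of `H`; otherwise there are at most
`(n - 2) + n` saturated vertices, and `|H| ≥ n² - 2n + 2`.
-/

open Finset Sum

lemma mem_EKbip {m n : ℕ} {e : Sym2 BipV} :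
    e ∈ EKbip m n ↔ ∃ i ∈ Icc 1 m, ∃ j ∈ Icc 1 n, s(inl i, inr j) = e := by
  simp [EKbip, and_assoc]

lemma card_EKbip (m n : ℕ) : #(EKbip m n) = m * n := by
  rw [EKbip, card_image_of_injective, card_product, Nat.card_Icc, Nat.card_Icc, Nat.add_sub_cancel,
    Nat.add_sub_cancel]
  rintro ⟨i, j⟩ ⟨i', j'⟩ h
  simp_all

lemma degB_EKbip_inl_le (m n i : ℕ) : degB (EKbip m n) (inl i) ≤ n :=
  calc degB (EKbip m n) (inl i) ≤ #((Icc 1 n).image fun j => s(inl i, inr j)) := by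
        refine card_le_card fun e he => ?_
        obtain ⟨he, hie⟩ := mem_filter.mp he
        obtain ⟨a, -, j, hj, rfl⟩ := mem_EKbip.mp he
        simp_all
    _ ≤ n := card_image_le.trans (by simp)

lemma degB_EKbip_inr_le (m n j : ℕ) : degB (EKbip m n) (inr j) ≤ m :=
  calc degB (EKbip m n) (inr j) ≤ #((Icc 1 m).image fun i => s(inl i, inr j)) := by
        refine card_le_card fun e he => ?_
        obtain ⟨he, hje⟩ := mem_filter.mp he
        obtain ⟨i, hi, b, -, rfl⟩ := mem_EKbip.mp he
        simp_all
    _ ≤ m := card_image_le.trans (by simp)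

lemma degB_sdiff {H K : Finset (Sym2 BipV)} (h : H ⊆ K) (v : BipV) :
    degB (K \ H) v = degB K v - degB H v := by
  have : (K \ H).filter (v ∈ ·) = K.filter (v ∈ ·) \ H.filter (v ∈ ·) := by
    ext e
    simp only [mem_filter, mem_sdiff]
    tauto
  rw [degB, degB, degB, this, card_sdiff_of_subset (filter_subset_filter _ h)]

lemma degB_insert {H : Finset (Sym2 BipV)} {e : Sym2 BipV} (he : e ∉ H) (v : BipV) :
    degB (insert e H) v = degB H v + if v ∈ e then 1 else 0 := by
  unfold degB
  rw [filter_insert]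
  split_ifs
  · rw [card_insert_of_notMem (fun h => he (mem_filter.mp h).1)]
  · rfl

lemma card_le_sum_degB {M : Finset (Sym2 BipV)} {S : Finset BipV}
    (hM : ∀ e ∈ M, ∃ v ∈ S, v ∈ e) : #M ≤ ∑ v ∈ S, degB M v :=
  calc #M ≤ #(S.biUnion fun v => M.filter (v ∈ ·)) := by
        refine card_le_card fun e he => ?_
        obtain ⟨v, hv, hve⟩ := hM e he
        exact mem_biUnion.mpr ⟨v, hv, mem_filter.mpr ⟨he, hve⟩⟩
    _ ≤ ∑ v ∈ S, degB M v := card_biUnion_le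

lemma sum_degB_inl_le_card {m n : ℕ} {H : Finset (Sym2 BipV)} (hH : H ⊆ EKbip m n)
    (A : Finset ℕ) : ∑ i ∈ A, degB H (inl i) ≤ #H := by
  have hdisj : (A : Set ℕ).PairwiseDisjoint fun i => H.filter (inl i ∈ ·) := by
    intro i _ i' _ hii'
    refine disjoint_filter.mpr fun e he hi hi' => hii' ?_
    obtain ⟨a, -, b, -, rfl⟩ := mem_EKbip.mp (hH he)
    simp_all
  unfold degB
  rw [← card_biUnion hdisj]
  exact card_le_card (biUnion_subset.mpr fun _ _ => filter_subset _ _)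

lemma exists_mem_degB_eq_of_lt_degB_insert {H : Finset (Sym2 BipV)} {r : ℕ}
    (hdeg : ∀ v, degB H v ≤ r) {e : Sym2 BipV} (he : e ∉ H) {v : BipV}
    (hv : r < degB (insert e H) v) : v ∈ e ∧ degB H v = r := by
  have := hdeg v
  rw [degB_insert he] at hv
  split_ifs at hv with hve
  · exact ⟨hve, by omega⟩
  · omega

section Facet

variable {n : ℕ} {H : Finset (Sym2 BipV)}

lemma degB_EKbip_sdiff_le_one (hsub : H ⊆ EKbip n n) {v : BipV} (hv : degB H v = n - 1) :
    degB (EKbip n n \ H) v ≤ 1 := by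
  have : degB (EKbip n n) v ≤ n := by
    cases v with
    | inl i => exact degB_EKbip_inl_le n n i
    | inr j => exact degB_EKbip_inr_le n n j
  rw [degB_sdiff hsub]
  omega

lemma card_EKbip_sdiff_le_of_facet (hsub : H ⊆ EKbip n n) (hdeg : ∀ v, degB H v ≤ n - 1)
    (hmax : ∀ e ∈ EKbip n n, e ∉ H → ∃ v, n - 1 < degB (insert e H) v) :
    #(EKbip n n \ H) ≤
      #{i ∈ Icc 1 n | degB H (inl i) = n - 1} + #{j ∈ Icc 1 n | degB H (inr j) = n - 1} := by
  set S := {i ∈ Icc 1 n | degB H (inl i) = n - 1}.disjSum {j ∈ Icc 1 n | degB H (inr j) = n - 1}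
  have hcover : ∀ e ∈ EKbip n n \ H, ∃ v ∈ S, v ∈ e := by
    intro e he
    obtain ⟨heK, heH⟩ := mem_sdiff.mp he
    obtain ⟨v, hv⟩ := hmax e heK heH
    obtain ⟨hve, hsat⟩ := exists_mem_degB_eq_of_lt_degB_insert hdeg heH hv
    obtain ⟨i, hi, j, hj, rfl⟩ := mem_EKbip.mp heK
    refine ⟨v, ?_, hve⟩
    rcases Sym2.mem_iff.mp hve with rfl | rfl <;> simp_all [S]
  have hsat : ∀ v ∈ S, degB H v = n - 1 := by
    rintro (i | j) hv <;> simp_all [S]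
  calc #(EKbip n n \ H) ≤ ∑ v ∈ S, degB (EKbip n n \ H) v := card_le_sum_degB hcover
    _ ≤ ∑ v ∈ S, 1 := sum_le_sum fun v hv => degB_EKbip_sdiff_le_one hsub (hsat v hv)
    _ = _ := by simp [S, card_disjSum]

end Facet

theorem facet_card_lower_bound_bipartite_general (n : ℕ)
    (H : Finset (Sym2 BipV)) (hsub : H ⊆ EKbip n n)
    (hdeg : ∀ v, degB H v ≤ n - 1)
    (hmax : ∀ e ∈ EKbip n n, e ∉ H → ∃ v, n - 1 < degB (insert e H) v) :
    (n - 1) ^ 2 ≤ H.card := by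
  set A := {i ∈ Icc 1 n | degB H (inl i) = n - 1}
  have hrows : #A * (n - 1) ≤ #H :=
    calc #A * (n - 1) = ∑ i ∈ A, degB H (inl i) := by
          rw [sum_congr rfl fun i hi => (mem_filter.mp hi).2, sum_const, smul_eq_mul]
      _ ≤ #H := sum_degB_inl_le_card hsub A
  have hmissing : n * n ≤ #H + #A + n := by
    set B := {j ∈ Icc 1 n | degB H (inr j) = n - 1}
    have hB : #B ≤ n := (card_filter_le _ _).trans (by simp)
    have h : #(EKbip n n \ H) ≤ #A + #B := card_EKbip_sdiff_le_of_facet hsub hdeg hmax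
    rw [card_sdiff_of_subset hsub, card_EKbip] at h
    omega
  rcases le_or_gt (n - 1) #A with hA | hA
  · calc (n - 1) ^ 2 = (n - 1) * (n - 1) := sq _
      _ ≤ #A * (n - 1) := Nat.mul_le_mul_right _ hA
      _ ≤ #H := hrows
  · obtain ⟨k, rfl⟩ : ∃ k, n = k + 1 := ⟨n - 1, by omega⟩
    rw [Nat.add_sub_cancel] at hA ⊢
    nlinarith

/-- Every facet `H` of `M_{n-1}(K_{n,n})` (a face that cannot be extended by any
further edge of `K_{n,n}`) has at least `(n-1)²` edges. -/
theorem facet_card_lower_bound_bipartite (n : ℕ) (hn : 2 ≤ n)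
    (H : Finset (Sym2 BipV)) (hsub : H ⊆ EKbip n n)
    (hdeg : ∀ v, degB H v ≤ n - 1)
    (hmax : ∀ e ∈ EKbip n n, e ∉ H → ∃ v, n - 1 < degB (insert e H) v) :
    (n - 1) ^ 2 ≤ H.card :=
  facet_card_lower_bound_bipartite_general n H hsub hdeg hmax
end
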